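/- For every positive integer q, φ(q) - φ(q-1) ≥ 2e, where φ(x) = 1 + 2(x+1)(1+1/x)^x for x > 0 and φ(0) is defined as 3 (its limit as x → 0⁺). -/

import Mathlib

/-!
On `[0, ∞)` we have `φ = 1 + 2F` with `F(x) = (x + 1) ^ (x + 1) / x ^ x`, and `F' = F ℓ` where
`ℓ(x) = log (x + 1) - log x`. By the mean value theorem it suffices that `F' ≥ e` on `(0, ∞)`, i.e.
that `G = log F + log ℓ ≥ 1`. Now `G → 1` at infinity, and `G` is decreasing because
`G' = (ℓ² - 1 / (x (x + 1))) / ℓ`, where `ℓ² ≤ 1 / (x (x + 1))` is the inequality between the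
logarithmic and the geometric mean of `x` and `x + 1`.
-/

open Real Set Filter Topology

noncomputable def phi (x : ℝ) : ℝ :=
  if x = 0 then 3 else 1 + 2 * (x + 1) * (1 + 1 / x) ^ x

theorem Real.sq_log_sub_log_le {a b : ℝ} (ha : 0 < a) (hb : 0 < b) :
    (log b - log a) ^ 2 ≤ (b - a) ^ 2 / (a * b) := by
  set s := log b - log a with hs
  have h_half : (s / 2) ^ 2 ≤ sinh (s / 2) ^ 2 := by
    rw [sq_le_sq, abs_sinh]
    exact self_le_sinh_iff.2 (abs_nonneg _)
  have h_cosh : cosh s = 1 + 2 * sinh (s / 2) ^ 2 := by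
    rw [show s = 2 * (s / 2) by ring, cosh_two_mul, cosh_sq]
    ring_nf
  calc s ^ 2 ≤ 2 * (cosh s - 1) := by rw [h_cosh]; linarith
    _ = (b - a) ^ 2 / (a * b) := by
      rw [hs, ← log_div hb.ne' ha.ne', cosh_log (div_pos hb ha)]
      field_simp
      ring

/-- `log ((x + 1) ^ (x + 1) / x ^ x)`, written so that it is continuous on `ℝ`; since `0 * log 0 = 0`,
`phi = 1 + 2 * exp ∘ powRatioLog` holds at `0` as well. -/
noncomputable def powRatioLog (x : ℝ) : ℝ := (x + 1) * log (x + 1) - x * log x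

noncomputable def logDerivPowRatio (x : ℝ) : ℝ := powRatioLog x + log (log (x + 1) - log x)

theorem continuous_powRatioLog : Continuous powRatioLog :=
  (continuous_mul_log.comp (continuous_add_const 1)).sub continuous_mul_log

theorem hasDerivAt_powRatioLog {x : ℝ} (hx : 0 < x) :
    HasDerivAt powRatioLog (log (x + 1) - log x) x := by
  have h_succ := (hasDerivAt_mul_log (by linarith : x + 1 ≠ 0)).comp_add_const x 1
  exact (h_succ.sub (hasDerivAt_mul_log hx.ne')).congr_deriv (by ring)

theorem log_succ_sub_log_pos {x : ℝ} (hx : 0 < x) : 0 < log (x + 1) - log x :=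
  sub_pos.2 (log_lt_log hx (lt_add_one x))

theorem hasDerivAt_log_succ_sub_log {x : ℝ} (hx : 0 < x) :
    HasDerivAt (fun y => log (y + 1) - log y) ((x + 1)⁻¹ - x⁻¹) x :=
  ((hasDerivAt_log (by linarith)).comp_add_const x 1).sub (hasDerivAt_log hx.ne')

theorem hasDerivAt_logDerivPowRatio {x : ℝ} (hx : 0 < x) :
    HasDerivAt logDerivPowRatio
      (log (x + 1) - log x + ((x + 1)⁻¹ - x⁻¹) / (log (x + 1) - log x)) x :=
  (hasDerivAt_powRatioLog hx).add
    ((hasDerivAt_log_succ_sub_log hx).log (log_succ_sub_log_pos hx).ne')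

theorem antitoneOn_logDerivPowRatio : AntitoneOn logDerivPowRatio (Ioi 0) := by
  refine antitoneOn_of_hasDerivWithinAt_nonpos (convex_Ioi 0)
    (fun x hx => (hasDerivAt_logDerivPowRatio hx).continuousAt.continuousWithinAt)
    (fun x hx => (hasDerivAt_logDerivPowRatio (interior_subset hx)).hasDerivWithinAt) ?_
  intro x hx
  rw [interior_Ioi, mem_Ioi] at hx
  have hℓ := log_succ_sub_log_pos hx
  have h_mean := Real.sq_log_sub_log_le hx (by linarith : 0 < x + 1)
  rw [add_sub_cancel_left, one_pow] at h_mean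
  have h_factor : log (x + 1) - log x + ((x + 1)⁻¹ - x⁻¹) / (log (x + 1) - log x)
      = ((log (x + 1) - log x) ^ 2 - 1 / (x * (x + 1))) / (log (x + 1) - log x) := by
    field_simp
    ring
  rw [h_factor]
  exact div_nonpos_of_nonpos_of_nonneg (by linarith) hℓ.le

theorem log_one_add_inv {x : ℝ} (hx : 0 < x) : log (1 + x⁻¹) = log (x + 1) - log x := by
  rw [← log_div (by linarith) hx.ne', add_div, div_self hx.ne', one_div]

theorem tendsto_logDerivPowRatio_atTop : Tendsto logDerivPowRatio atTop (𝓝 1) := by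
  have h_mul : Tendsto (fun x : ℝ => x * log (1 + x⁻¹)) atTop (𝓝 1) := by
    simpa using tendsto_mul_log_one_add_div_atTop 1
  have h_log : Tendsto (fun x : ℝ => log (1 + x⁻¹)) atTop (𝓝 0) := by
    simpa using (tendsto_inv_atTop_zero.const_add 1).log (by norm_num)
  have h_lim := h_mul.add ((h_mul.add h_log).log (by norm_num))
  rw [add_zero, log_one, add_zero] at h_lim
  refine h_lim.congr' ?_
  filter_upwards [eventually_gt_atTop 0] with x hx
  rw [log_one_add_inv hx, logDerivPowRatio, powRatioLog, ← add_one_mul,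
    log_mul (by linarith) (log_succ_sub_log_pos hx).ne']
  ring

theorem one_le_logDerivPowRatio {x : ℝ} (hx : 0 < x) : 1 ≤ logDerivPowRatio x :=
  le_of_tendsto tendsto_logDerivPowRatio_atTop <| by
    filter_upwards [eventually_ge_atTop x] with y hy
    exact antitoneOn_logDerivPowRatio hx (hx.trans_le hy) hy

theorem exp_one_le_deriv_exp_powRatioLog {x : ℝ} (hx : 0 < x) :
    exp 1 ≤ exp (powRatioLog x) * (log (x + 1) - log x) := by
  rw [← exp_log (log_succ_sub_log_pos hx), ← exp_add]
  exact exp_le_exp.2 (one_le_logDerivPowRatio hx)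

theorem exp_one_mul_sub_le_exp_powRatioLog_sub {a b : ℝ} (ha : 0 ≤ a) (hab : a ≤ b) :
    exp 1 * (b - a) ≤ exp (powRatioLog b) - exp (powRatioLog a) := by
  have h_deriv {x : ℝ} (hx : x ∈ interior (Ici 0)) :
      HasDerivAt (fun y => exp (powRatioLog y))
        (exp (powRatioLog x) * (log (x + 1) - log x)) x := by
    rw [interior_Ici] at hx
    exact (hasDerivAt_powRatioLog hx).exp
  refine (convex_Ici 0).mul_sub_le_image_sub_of_le_deriv
    continuous_powRatioLog.rexp.continuousOn
    (fun x hx => (h_deriv hx).differentiableAt.differentiableWithinAt) (fun x hx => ?_)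
    a ha b (ha.trans hab) hab
  rw [(h_deriv hx).deriv]
  exact exp_one_le_deriv_exp_powRatioLog (by simpa using hx)

theorem phi_eq_one_add_two_mul_exp_powRatioLog {x : ℝ} (hx : 0 ≤ x) :
    phi x = 1 + 2 * exp (powRatioLog x) := by
  rcases hx.eq_or_lt with rfl | hx
  · norm_num [phi, powRatioLog]
  rw [phi, if_neg hx.ne', rpow_def_of_pos (by positivity), one_div, log_one_add_inv hx, mul_assoc,
    powRatioLog, show (x + 1) * log (x + 1) - x * log x = log (x + 1) + (log (x + 1) - log x) * x
      by ring, exp_add, exp_log (by linarith)]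

theorem phi_gap (q : ℕ) (hq : 1 ≤ q) :
    phi q - phi (q - 1 : ℕ) ≥ 2 * Real.exp 1 := by
  have h_cast : ((q - 1 : ℕ) : ℝ) = q - 1 := by push_cast [hq]; ring
  have h_pred : (0 : ℝ) ≤ q - 1 := by
    rw [← h_cast]; exact Nat.cast_nonneg _
  have h_gap := exp_one_mul_sub_le_exp_powRatioLog_sub h_pred (sub_le_self _ zero_le_one)
  rw [h_cast, phi_eq_one_add_two_mul_exp_powRatioLog (Nat.cast_nonneg q),
    phi_eq_one_add_two_mul_exp_powRatioLog h_pred]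
  linarith
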